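/- Let $M$ be a monoid and $f_1, \dots, f_n \in M$ elements such that (1) $f_i f_i = f_i$ for all $i$, (2) $f_i f_j = f_j f_i$ whenever $|i - j| \ge 2$, and (3) $f_i f_{i+1} f_i = f_{i+1} f_i f_{i+1}$ for all $1 \le i \le n-1$. Let $F = f_1 (f_2 f_1)(f_3 f_2 f_1) \cdots (f_n f_{n-1} \cdots f_1)$ (composition of the descending products). Then $f_i F = F$ for every $i$ with $1 \le i \le n$. -/
import Mathlib


/-- The descending product `f k * f (k-1) * ⋯ * f 1`. -/
def descProd {M : Type*} [Monoid M] (f : ℕ → M) : ℕ → M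
  | 0 => 1
  | k + 1 => f (k + 1) * descProd f k

/-- `F = f 1 * (f 2 * f 1) * (f 3 * f 2 * f 1) * ⋯ * (f n * ⋯ * f 1)`. -/
def foldProd {M : Type*} [Monoid M] (f : ℕ → M) : ℕ → M
  | 0 => 1
  | k + 1 => foldProd f k * descProd f (k + 1)

/-- The ascending product `f 1 * f 2 * ⋯ * f k`. -/
def ascProd {M : Type*} [Monoid M] (f : ℕ → M) : ℕ → M
  | 0 => 1
  | k + 1 => ascProd f k * f (k + 1)

/-- `(f 1 ⋯ f k) * (f 1 ⋯ f (k-1)) * ⋯ * (f 1)` grouped as `A k * Q (k-1)`. -/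
def ascFold {M : Type*} [Monoid M] (f : ℕ → M) : ℕ → M
  | 0 => 1
  | k + 1 => ascProd f (k + 1) * ascFold f k

/-- If `f 1, …, f n` are idempotents satisfying the braid relation and commuting at
distance `≥ 2`, then `f i * F = F` for `F` the composite of descending products. -/
theorem stmt1 {M : Type*} [Monoid M] (n : ℕ) (f : ℕ → M)
    (hidem : ∀ i, 1 ≤ i → i ≤ n → f i * f i = f i)
    (hcomm : ∀ i j, 1 ≤ i → 1 ≤ j → i ≤ n → j ≤ n → i + 2 ≤ j → f i * f j = f j * f i)
    (hbraid : ∀ i, 1 ≤ i → i + 1 ≤ n →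
      f i * f (i + 1) * f i = f (i + 1) * f i * f (i + 1)) :
    ∀ i, 1 ≤ i → i ≤ n → f i * foldProd f n = foldProd f n := by
  -- L1: f j commutes with ascProd f m when m + 2 ≤ j
  have L1 : ∀ m j, m + 2 ≤ j → j ≤ n → f j * ascProd f m = ascProd f m * f j := by
    intro m
    induction m with
    | zero => intro j _ _; simp [ascProd]
    | succ m ih =>
      intro j hj hjn
      have h1 : f j * ascProd f m = ascProd f m * f j := ih j (by omega) hjn
      have h2 : f (m + 1) * f j = f j * f (m + 1) :=
        hcomm (m + 1) j (by omega) (by omega) (by omega) hjn (by omega)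
      simp only [ascProd]
      rw [← mul_assoc, h1, mul_assoc, ← h2, ← mul_assoc]
  -- L2: f j commutes with ascFold f m when m + 2 ≤ j
  have L2 : ∀ m j, m + 2 ≤ j → j ≤ n → f j * ascFold f m = ascFold f m * f j := by
    intro m
    induction m with
    | zero => intro j _ _; simp [ascFold]
    | succ m ih =>
      intro j hj hjn
      simp only [ascFold]
      rw [← mul_assoc, L1 (m + 1) j hj hjn, mul_assoc, ih j (by omega) hjn, ← mul_assoc]
  -- L3: f 1 absorbs into ascProd f k on the left, for 1 ≤ k ≤ n
  have L3 : ∀ k, 1 ≤ k → k ≤ n → f 1 * ascProd f k = ascProd f k := by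
    intro k
    induction k with
    | zero => omega
    | succ k ih =>
      intro _ hkn
      rcases Nat.eq_zero_or_pos k with hk | hk
      · subst hk
        simp only [ascProd, one_mul]
        exact hidem 1 le_rfl (by omega)
      · simp only [ascProd]
        rw [← mul_assoc, ih hk (by omega)]
  -- L4: f (i+1) * ascProd f k = ascProd f k * f i for 1 ≤ i, i + 1 ≤ k ≤ n
  have L4 : ∀ k i, 1 ≤ i → i + 1 ≤ k → k ≤ n →
      f (i + 1) * ascProd f k = ascProd f k * f i := by
    intro k
    induction k with
    | zero => intro i _ h _; omega
    | succ k ih =>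
      intro i hi hik hkn
      rcases Nat.lt_or_ge (i + 1) (k + 1) with hlt | hge
      · -- i + 1 ≤ k
        have h1 := ih i hi (by omega) (by omega)
        have h2 : f i * f (k + 1) = f (k + 1) * f i :=
          hcomm i (k + 1) hi (by omega) (by omega) hkn (by omega)
        simp only [ascProd]
        rw [← mul_assoc, h1, mul_assoc, h2, ← mul_assoc]
      · -- i = k
        have hik' : i = k := by omega
        subst hik'
        obtain ⟨m, rfl⟩ : ∃ m, i = m + 1 := ⟨i - 1, by omega⟩
        -- ascProd f (i+1) = ascProd f (i-1) * f i * f (i+1) with i = m+1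
        show f (m + 2) * ascProd f (m + 2) = ascProd f (m + 2) * f (m + 1)
        have hc : f (m + 2) * ascProd f m = ascProd f m * f (m + 2) :=
          L1 m (m + 2) (by omega) (by omega)
        have hb : f (m + 1) * f (m + 2) * f (m + 1) = f (m + 2) * f (m + 1) * f (m + 2) :=
          hbraid (m + 1) (by omega) (by omega)
        show f (m + 2) * (ascProd f m * f (m + 1) * f (m + 2))
            = ascProd f m * f (m + 1) * f (m + 2) * f (m + 1)
        calc f (m + 2) * (ascProd f m * f (m + 1) * f (m + 2))
            = ascProd f m * (f (m + 2) * f (m + 1) * f (m + 2)) := by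
              rw [← mul_assoc, ← mul_assoc, hc]; simp [mul_assoc]
          _ = ascProd f m * (f (m + 1) * f (m + 2) * f (m + 1)) := by rw [← hb]
          _ = ascProd f m * f (m + 1) * f (m + 2) * f (m + 1) := by simp [mul_assoc]
  -- L5: ascFold f k * descProd f (k+1) = ascProd f (k+1) * ascFold f k, for k + 1 ≤ n
  have L5 : ∀ k, k + 1 ≤ n →
      ascFold f k * descProd f (k + 1) = ascProd f (k + 1) * ascFold f k := by
    intro k
    induction k with
    | zero => intro _; simp [ascFold, ascProd, descProd]
    | succ k ih =>
      intro hkn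
      have h1 : f (k + 2) * ascFold f k = ascFold f k * f (k + 2) :=
        L2 k (k + 2) (by omega) hkn
      have h2 := ih (by omega)
      show ascProd f (k + 1) * ascFold f k * (f (k + 2) * descProd f (k + 1))
          = ascProd f (k + 1) * f (k + 2) * (ascProd f (k + 1) * ascFold f k)
      calc ascProd f (k + 1) * ascFold f k * (f (k + 2) * descProd f (k + 1))
          = ascProd f (k + 1) * (ascFold f k * f (k + 2)) * descProd f (k + 1) := by
            simp [mul_assoc]
        _ = ascProd f (k + 1) * (f (k + 2) * ascFold f k) * descProd f (k + 1) := by rw [h1]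
        _ = ascProd f (k + 1) * f (k + 2) * (ascFold f k * descProd f (k + 1)) := by
            simp [mul_assoc]
        _ = ascProd f (k + 1) * f (k + 2) * (ascProd f (k + 1) * ascFold f k) := by rw [h2]
  -- L6: foldProd f k = ascFold f k for k ≤ n
  have L6 : ∀ k, k ≤ n → foldProd f k = ascFold f k := by
    intro k
    induction k with
    | zero => intro _; rfl
    | succ k ih =>
      intro hkn
      show foldProd f k * descProd f (k + 1) = ascProd f (k + 1) * ascFold f k
      rw [ih (by omega), L5 k hkn]
  -- L7: left absorption for ascFold
  have L7 : ∀ k i, 1 ≤ i → i ≤ k → k ≤ n → f i * ascFold f k = ascFold f k := by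
    intro k
    induction k with
    | zero => intro i _ h _; omega
    | succ k ih =>
      intro i hi hik hkn
      show f i * (ascProd f (k + 1) * ascFold f k) = ascProd f (k + 1) * ascFold f k
      rcases Nat.lt_or_ge i 2 with h1 | h2
      · have : i = 1 := by omega
        subst this
        rw [← mul_assoc, L3 (k + 1) (by omega) hkn]
      · obtain ⟨j, rfl⟩ : ∃ j, i = j + 1 := ⟨i - 1, by omega⟩
        rw [← mul_assoc, L4 (k + 1) j (by omega) hik hkn, mul_assoc,
          ih j (by omega) (by omega) (by omega)]
  intro i hi hin
  rw [L6 n le_rfl]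
  exact L7 n i hi hin le_rfl
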